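/- arXiv:2510.21378 — 2 statements merged into one kernel-verified Lean document; each statement's English description precedes it below -/
import Mathlib

section
/- Maximizing F(c) = (Σ_k c_k)² / (Σ_k c_k² + σ²) over the box 0 ≤ c_k ≤ u_k admits an optimal solution of capped form: there exists τ ≥ 0 such that c_k* = min(u_k, τ) for all k is a maximizer. -/
/-- Maximizing `F c = (∑ c k)² / (∑ (c k)² + σ²)` over the box
`0 ≤ c k ≤ u k` admits an optimal solution of capped form: there is `τ ≥ 0`
such that `c* k = min (u k) τ` is a maximizer. -/
theorem capped_form_maximizes_ratio
    (K : ℕ) (hK : 1 ≤ K) (u : Fin K → ℝ) (hu : ∀ k, 0 < u k)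
    (σ2 : ℝ) (hσ2 : 0 < σ2)
    (F : (Fin K → ℝ) → ℝ)
    (hF : ∀ c, F c = (∑ k, c k) ^ 2 / (∑ k, (c k) ^ 2 + σ2)) :
    ∃ τ : ℝ, 0 ≤ τ ∧
      ∀ c : Fin K → ℝ, (∀ k, 0 ≤ c k) → (∀ k, c k ≤ u k) →
        F c ≤ F (fun k => min (u k) τ) := by
  set M : ℝ := ∑ k, u k with hM
  have hM0 : (0:ℝ) ≤ M := Finset.sum_nonneg fun k _ => (hu k).le
  -- continuity of the capped sum
  have hcont : Continuous (fun τ : ℝ => ∑ k, min (u k) τ) := by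
    apply continuous_finset_sum
    intro k _
    exact continuous_const.min continuous_id
  have hcont2 : Continuous (fun τ : ℝ => ∑ k, (min (u k) τ) ^ 2) := by
    apply continuous_finset_sum
    intro k _
    exact (continuous_const.min continuous_id).pow 2
  have hg : Continuous (fun τ : ℝ => F (fun k => min (u k) τ)) := by
    simp only [hF]
    apply Continuous.div (hcont.pow 2) (hcont2.add continuous_const)
    intro τ
    have : 0 < ∑ k, (min (u k) τ) ^ 2 + σ2 := by positivity
    exact this.ne'
  obtain ⟨τ, hτmem, hτmax⟩ :=
    (isCompact_Icc : IsCompact (Set.Icc (0:ℝ) M)).exists_isMaxOn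
      (Set.nonempty_Icc.mpr hM0) hg.continuousOn
  refine ⟨τ, hτmem.1, ?_⟩
  intro c hc0 hcu
  have hS0 : 0 ≤ ∑ k, c k := Finset.sum_nonneg fun k _ => hc0 k
  have hSM : ∑ k, c k ≤ M := Finset.sum_le_sum fun k _ => hcu k
  have h0 : (∑ k, min (u k) (0:ℝ)) = 0 := by
    simp only [min_eq_right (hu _).le]
    simp
  have hMval : (∑ k, min (u k) M) = M := by
    rw [hM]
    apply Finset.sum_congr rfl
    intro k _
    exact min_eq_left (Finset.single_le_sum (fun j _ => (hu j).le) (Finset.mem_univ k))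
  -- IVT: find τ' with matching sum
  have hivt := intermediate_value_Icc hM0 hcont.continuousOn
  have hmem : (∑ k, c k) ∈ Set.Icc (∑ k, min (u k) (0:ℝ)) (∑ k, min (u k) M) := by
    rw [h0, hMval]; exact ⟨hS0, hSM⟩
  obtain ⟨τ', hτ'mem, hτ'sum0⟩ := hivt hmem
  have hτ'sum : (∑ k, min (u k) τ') = ∑ k, c k := hτ'sum0
  -- key pointwise inequality
  have key : ∀ k, 0 ≤ (c k - min (u k) τ') * (c k + min (u k) τ' - 2 * τ') := by
    intro k
    rcases le_or_gt (c k) (min (u k) τ') with h | h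
    · have hd : min (u k) τ' ≤ τ' := min_le_right _ _
      have h1 : c k - min (u k) τ' ≤ 0 := by linarith
      have h2 : c k + min (u k) τ' - 2 * τ' ≤ 0 := by linarith
      nlinarith
    · have hlt : min (u k) τ' < u k := lt_of_lt_of_le h (hcu k)
      have hτu : τ' < u k := by
        by_contra hcon
        push_neg at hcon
        rw [min_eq_left hcon] at hlt
        exact lt_irrefl _ hlt
      have hd : min (u k) τ' = τ' := min_eq_right hτu.le
      rw [hd] at h ⊢
      nlinarith
  have hsum0 : 0 ≤ ∑ k, (c k - min (u k) τ') * (c k + min (u k) τ' - 2 * τ') :=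
    Finset.sum_nonneg fun k _ => key k
  have hexp : ∑ k, (c k - min (u k) τ') * (c k + min (u k) τ' - 2 * τ')
      = ∑ k, (c k) ^ 2 - ∑ k, (min (u k) τ') ^ 2
        - 2 * τ' * (∑ k, c k) + 2 * τ' * (∑ k, min (u k) τ') := by
    rw [Finset.mul_sum, Finset.mul_sum, ← Finset.sum_sub_distrib, ← Finset.sum_sub_distrib,
      ← Finset.sum_add_distrib]
    apply Finset.sum_congr rfl
    intro k _
    ring
  have hQ : ∑ k, (min (u k) τ') ^ 2 ≤ ∑ k, (c k) ^ 2 := by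
    rw [hexp, hτ'sum] at hsum0
    linarith
  have step1 : F c ≤ F (fun k => min (u k) τ') := by
    rw [hF, hF]
    have hden : (0:ℝ) < ∑ k, (min (u k) τ') ^ 2 + σ2 := by positivity
    rw [show (∑ k, c k) = ∑ k, min (u k) τ' from hτ'sum.symm]
    apply div_le_div_of_nonneg_left (by positivity) hden (by linarith)
  exact step1.trans (hτmax hτ'mem)
end

section
/- If 0 < u_1 ≤ u_2 ≤ ... ≤ u_K and τ_j = (Σ_{k=1}^j u_k² + σ²)/(Σ_{k=1}^j u_k) for j ≥ 1, then the value of F(c) = (Σ c_k)²/(Σ c_k² + σ²) at the capped point c_k = min(u_k, τ_j) equals Δ'·(Σ_{k≤j} u_k + (K−j)τ_j)²/(Σ_{k≤j} u_k² + (K−j)τ_j² + σ²) and, when τ_j ∈ (u_j, u_{j+1}], this point satisfies the first-order stationarity condition of F restricted to that segment. -/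
/-!
On the segment `u j < τ ≤ u (j + 1)` the capped point keeps the first `j` amplitudes and
replaces the remaining `K - j` by `τ`, so both sums defining `F` become the affine and
quadratic expressions in `τ` of the segment objective. Its derivative is
`2Δ'm(U₁ + mτ)(U₂ + σ² - τU₁)/(U₂ + mτ² + σ²)²` with `m = K - j`, which vanishes at
`τ = (U₂ + σ²)/U₁`.
-/

open Finset

theorem sum_Icc_comp_min_of_monotone {α M : Type*} [LinearOrder α] [AddCommMonoid M]
    (f : α → M) {u : ℕ → α} (hu : Monotone u) {j K : ℕ} (hjK : j ≤ K) {t : α}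
    (hlow : u j ≤ t) (hhigh : t ≤ u (j + 1)) :
    ∑ k ∈ Icc 1 K, f (min (u k) t) = ∑ k ∈ Icc 1 j, f (u k) + (K - j) • f t := by
  have hIcc (n : ℕ) : Icc 1 n = Ioc 0 n := Icc_add_one_left_eq_Ioc 0 n
  rw [hIcc, hIcc, ← sum_Ioc_consecutive _ (Nat.zero_le j) hjK]
  congr 1
  · refine sum_congr rfl fun k hk => ?_
    rw [min_eq_left ((hu (mem_Ioc.1 hk).2).trans hlow)]
  · rw [sum_congr rfl fun k hk => by rw [min_eq_right (hhigh.trans (hu (mem_Ioc.1 hk).1))],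
      sum_const, Nat.card_Ioc]

theorem hasDerivAt_mul_sq_div (c a b m s τ : ℝ) (hden : b + m * τ ^ 2 + s ≠ 0) :
    HasDerivAt (fun x => c * (a + m * x) ^ 2 / (b + m * x ^ 2 + s))
      (2 * c * m * (a + m * τ) * (b + s - τ * a) / (b + m * τ ^ 2 + s) ^ 2) τ := by
  have hnum : HasDerivAt (fun x => c * (a + m * x) ^ 2) (c * (2 * (a + m * τ) * m)) τ := by
    simpa using ((((hasDerivAt_id τ).const_mul m).const_add a).pow 2).const_mul c
  have hdenom : HasDerivAt (fun x => b + m * x ^ 2 + s) (m * (2 * τ)) τ := by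
    simpa using (((hasDerivAt_pow 2 τ).const_mul m).const_add b).add_const s
  exact (hnum.div hdenom hden).congr_deriv (by ring)

theorem capped_point_value_and_stationarity_general
    (K j : ℕ) (hjK : j < K)
    (u : ℕ → ℝ) (hu : ∀ k, 0 < u k) (hmono : Monotone u)
    (Δ' σ2 : ℝ) (hσ2 : 0 < σ2)
    (U₁ U₂ τj : ℝ)
    (hU₁ : U₁ = ∑ k ∈ Icc 1 j, u k) (hU₂ : U₂ = ∑ k ∈ Icc 1 j, (u k) ^ 2)
    (hτj : τj = (U₂ + σ2) / U₁)
    (hseg : u j < τj ∧ τj ≤ u (j + 1)) :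
    Δ' * (∑ k ∈ Icc 1 K, min (u k) τj) ^ 2 /
        (∑ k ∈ Icc 1 K, (min (u k) τj) ^ 2 + σ2) =
      Δ' * (U₁ + ((K : ℝ) - j) * τj) ^ 2 /
        (U₂ + ((K : ℝ) - j) * τj ^ 2 + σ2) ∧
    deriv (fun τ : ℝ => Δ' * (U₁ + ((K : ℝ) - j) * τ) ^ 2 /
        (U₂ + ((K : ℝ) - j) * τ ^ 2 + σ2)) τj = 0 := by
  obtain ⟨hlow, hhigh⟩ := hseg
  have hcast : ((K - j : ℕ) : ℝ) = K - j := Nat.cast_sub hjK.le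
  have hcapped (f : ℝ → ℝ) := sum_Icc_comp_min_of_monotone f hmono hjK.le hlow.le hhigh
  refine ⟨?_, ?_⟩
  · have hsum := hcapped id
    have hsum_sq := hcapped (· ^ 2)
    simp only [id, nsmul_eq_mul, hcast, ← hU₁, ← hU₂] at hsum hsum_sq
    rw [hsum, hsum_sq]
  · -- `τj > 0` rules out the junk value `(U₂ + σ2) / 0 = 0`.
    have hU₁_ne : U₁ ≠ 0 := by
      rintro rfl
      linarith [hu j, hτj ▸ hlow, div_zero (U₂ + σ2)]
    have hstationary : τj * U₁ = U₂ + σ2 := by rw [hτj, div_mul_cancel₀ _ hU₁_ne]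
    have hden : 0 < U₂ + ((K : ℝ) - j) * τj ^ 2 + σ2 := by
      have : 0 ≤ U₂ := hU₂ ▸ sum_nonneg fun k _ => sq_nonneg (u k)
      have : (0 : ℝ) ≤ K - j := hcast ▸ Nat.cast_nonneg _
      positivity
    rw [(hasDerivAt_mul_sq_div _ _ _ _ _ _ hden.ne').deriv, hstationary, sub_self]
    simp

/-- With sorted `0 < u 1 ≤ … ≤ u K` and
`τⱼ = (∑_{k≤j} u k² + σ²)/(∑_{k≤j} u k)`, the value of
`F c = Δ'(∑ c k)²/(∑ c k² + σ²)` at the capped point `c k = min (u k) τⱼ` equals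
`Δ'(U₁ + (K−j)τⱼ)²/(U₂ + (K−j)τⱼ² + σ²)`, and when `τⱼ ∈ (u j, u (j+1)]` this
point satisfies the first-order stationarity condition of the segment-restricted
objective. -/
theorem capped_point_value_and_stationarity
    (K j : ℕ) (hj1 : 1 ≤ j) (hjK : j < K)
    (u : ℕ → ℝ) (hu : ∀ k, 0 < u k) (hmono : Monotone u)
    (Δ' σ2 : ℝ) (hΔ : 0 < Δ') (hσ2 : 0 < σ2)
    (U₁ U₂ τj : ℝ)
    (hU₁ : U₁ = ∑ k ∈ Icc 1 j, u k) (hU₂ : U₂ = ∑ k ∈ Icc 1 j, (u k) ^ 2)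
    (hτj : τj = (U₂ + σ2) / U₁)
    (hseg : u j < τj ∧ τj ≤ u (j + 1)) :
    Δ' * (∑ k ∈ Icc 1 K, min (u k) τj) ^ 2 /
        (∑ k ∈ Icc 1 K, (min (u k) τj) ^ 2 + σ2) =
      Δ' * (U₁ + ((K : ℝ) - j) * τj) ^ 2 /
        (U₂ + ((K : ℝ) - j) * τj ^ 2 + σ2) ∧
    deriv (fun τ : ℝ => Δ' * (U₁ + ((K : ℝ) - j) * τ) ^ 2 /
        (U₂ + ((K : ℝ) - j) * τ ^ 2 + σ2)) τj = 0 :=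
  capped_point_value_and_stationarity_general K j hjK u hu hmono Δ' σ2 hσ2 U₁ U₂ τj hU₁ hU₂ hτj hseg
end
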